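/- If Ū is independent of the pair (X1, X2), and W = X2 w.p. α2 and W = c w.p. 1 - α2 with the Bernoulli switch independent of (X1, X2, Ū), then H(X1, X2 | W) = α2 H(X1 | X2) + (1 - α2) H(X1, X2), and hence I(W; X1, X2) = α2 H(X2). -/

import Mathlib

/-!
Write `X = (X1, X2)` and `W` for the erased copy of `X2`. Together with `X`, the output `W` still
reveals the switch `S` (`W = none` exactly when `S` is false), so `H(X, W) = H(S, X) = H(S) + H(X)`
by independence of `S` and `X`. On its own, `W` is an erasure of `X2`, whence
`H(W) = H(S) + α2 H(X2)`. Both identities follow by subtracting.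
-/

open scoped Classical
open Real

/-- Probability that random variable `X` takes value `a` under pmf `p` on sample space `Ω`. -/
noncomputable def pr {Ω α : Type} [Fintype Ω] (p : Ω → ℝ) (X : Ω → α) (a : α) : ℝ :=
  ∑ ω, if X ω = a then p ω else 0

/-- Shannon entropy (base 2) of the random variable `X`. -/
noncomputable def ent {Ω α : Type} [Fintype Ω] [Fintype α] (p : Ω → ℝ) (X : Ω → α) : ℝ :=
  -∑ a, pr p X a * Real.logb 2 (pr p X a)

/-- Conditional entropy `H(X|Y)`. -/
noncomputable def entC {Ω α β : Type} [Fintype Ω] [Fintype α] [Fintype β]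
    (p : Ω → ℝ) (X : Ω → α) (Y : Ω → β) : ℝ :=
  ent p (fun ω => (X ω, Y ω)) - ent p Y

/-- Mutual information `I(X;Y)`. -/
noncomputable def mi {Ω α β : Type} [Fintype Ω] [Fintype α] [Fintype β]
    (p : Ω → ℝ) (X : Ω → α) (Y : Ω → β) : ℝ :=
  ent p X + ent p Y - ent p (fun ω => (X ω, Y ω))

/-- Conditional mutual information `I(X;U|Y)`. -/
noncomputable def miC {Ω α β γ : Type} [Fintype Ω] [Fintype α] [Fintype β] [Fintype γ]
    (p : Ω → ℝ) (X : Ω → α) (U : Ω → β) (Y : Ω → γ) : ℝ :=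
  entC p X Y + entC p U Y - entC p (fun ω => (X ω, U ω)) Y

/-- Independence of random variables `X` and `Y` under pmf `p`. -/
def IndepRV {Ω α β : Type} [Fintype Ω] (p : Ω → ℝ) (X : Ω → α) (Y : Ω → β) : Prop :=
  ∀ a b, pr p (fun ω => (X ω, Y ω)) (a, b) = pr p X a * pr p Y b

section

variable {Ω α β γ : Type} [Fintype Ω] (p : Ω → ℝ)

-- No sign conditions are needed: `Real.log` is `log |x|`, and both sides vanish when `x * y = 0`.
lemma mul_logb_mul (x y : ℝ) :
    (x * y) * Real.logb 2 (x * y) = y * (x * Real.logb 2 x) + x * (y * Real.logb 2 y) := by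
  rcases eq_or_ne x 0 with rfl | hx
  · simp
  rcases eq_or_ne y 0 with rfl | hy
  · simp
  rw [Real.logb_mul hx hy]
  ring

lemma sum_pr [Fintype α] (hp1 : ∑ ω, p ω = 1) (X : Ω → α) : ∑ a, pr p X a = 1 := by
  unfold pr
  rw [Finset.sum_comm]
  simpa using hp1

lemma pr_comp [Fintype α] (f : α → β) (X : Ω → α) (b : β) :
    pr p (fun ω => f (X ω)) b = ∑ a, if f a = b then pr p X a else 0 := by
  simp only [pr, Finset.ite_sum_zero]
  rw [Finset.sum_comm]
  refine Finset.sum_congr rfl fun ω _ => ?_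
  rw [Fintype.sum_eq_single (X ω) fun a ha => by simp [Ne.symm ha]]
  simp

lemma pr_pair_comp_right [Fintype β] (X : Ω → α) (Y : Ω → β) (f : β → γ) (a : α) (c : γ) :
    pr p (fun ω => (X ω, f (Y ω))) (a, c) =
      ∑ b, if f b = c then pr p (fun ω => (X ω, Y ω)) (a, b) else 0 := by
  simp only [pr, Finset.ite_sum_zero]
  rw [Finset.sum_comm]
  refine Finset.sum_congr rfl fun ω _ => ?_
  rw [Fintype.sum_eq_single (Y ω) fun b hb => by simp [Ne.symm hb]]
  by_cases hX : X ω = a <;> simp [hX]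

lemma IndepRV.comp_right [Fintype β] {X : Ω → α} {Y : Ω → β} (h : IndepRV p X Y) (f : β → γ) :
    IndepRV p X (fun ω => f (Y ω)) := by
  intro a c
  rw [pr_pair_comp_right, pr_comp p f Y, Finset.mul_sum]
  simp only [h a, mul_ite, mul_zero]

lemma ent_comp_of_injective [Fintype α] [Fintype β] {f : α → β} (hf : Function.Injective f)
    (X : Ω → α) : ent p (fun ω => f (X ω)) = ent p X := by
  have hpr : ∀ a, pr p (fun ω => f (X ω)) (f a) = pr p X a := fun a => by
    simp only [pr, hf.eq_iff]
  have hzero : ∀ b ∉ Set.range f, pr p (fun ω => f (X ω)) b = 0 := fun b hb =>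
    Finset.sum_eq_zero fun ω _ => if_neg fun h => hb ⟨X ω, h⟩
  unfold ent
  congr 1
  exact (Fintype.sum_of_injective f hf _ _ (fun b hb => by simp [hzero b hb])
    (fun a => by rw [hpr])).symm

lemma ent_pair_of_indep [Fintype α] [Fintype β] (hp1 : ∑ ω, p ω = 1) {X : Ω → α} {Y : Ω → β}
    (h : IndepRV p X Y) : ent p (fun ω => (X ω, Y ω)) = ent p X + ent p Y := by
  unfold ent
  rw [Fintype.sum_prod_type]
  simp only [h _ _, mul_logb_mul, Finset.sum_add_distrib, ← Finset.mul_sum, ← Finset.sum_mul,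
    sum_pr p hp1]
  ring

lemma erasure_pair_injective (g : α → β) :
    Function.Injective fun q : Bool × α => (q.2, if q.1 then some (g q.2) else none) := by
  rintro ⟨s, x⟩ ⟨s', x'⟩ h
  simp only [Prod.mk.injEq] at h
  obtain ⟨rfl, h⟩ := h
  cases s <;> cases s' <;> simp_all

lemma ent_erasure [Fintype β] (hp1 : ∑ ω, p ω = 1) {S : Ω → Bool} {Y : Ω → β}
    (h : IndepRV p S Y) :
    ent p (fun ω => if S ω then some (Y ω) else none) = ent p S + pr p S true * ent p Y := by
  have hnone : pr p (fun ω => if S ω then some (Y ω) else none) none = pr p S false :=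
    Finset.sum_congr rfl fun ω _ => by cases hs : S ω <;> simp [hs]
  have hsome : ∀ b, pr p (fun ω => if S ω then some (Y ω) else none) (some b) =
      pr p S true * pr p Y b := fun b => by
    rw [← h true b]
    exact Finset.sum_congr rfl fun ω _ => by cases S ω <;> simp
  unfold ent
  rw [Fintype.sum_option, Fintype.sum_bool, hnone]
  simp only [hsome, mul_logb_mul, Finset.sum_add_distrib, ← Finset.mul_sum, ← Finset.sum_mul,
    sum_pr p hp1]
  ring

end

theorem randomized_response_cond_ent_general {Ω α β γ : Type}
    [Fintype Ω] [Fintype α] [Fintype β] [Fintype γ]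
    (p : Ω → ℝ) (hp1 : ∑ ω, p ω = 1)
    (X1 : Ω → α) (X2 : Ω → β) (U : Ω → γ) (S : Ω → Bool) (α2 : ℝ)
    (hS : pr p S true = α2)
    (hSind : IndepRV p S (fun ω => (X1 ω, X2 ω, U ω))) :
    entC p (fun ω => (X1 ω, X2 ω))
        (fun ω => (if S ω then some (X2 ω) else none : Option β)) =
      α2 * entC p X1 X2 + (1 - α2) * ent p (fun ω => (X1 ω, X2 ω)) ∧
    mi p (fun ω => (if S ω then some (X2 ω) else none : Option β))
        (fun ω => (X1 ω, X2 ω)) = α2 * ent p X2 := by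
  have hSX : IndepRV p S (fun ω => (X1 ω, X2 ω)) := hSind.comp_right p fun t => (t.1, t.2.1)
  have hXW : ent p (fun ω => ((X1 ω, X2 ω), if S ω then some (X2 ω) else none)) =
      ent p S + ent p (fun ω => (X1 ω, X2 ω)) := by
    rw [← ent_pair_of_indep p hp1 hSX]
    exact ent_comp_of_injective p (erasure_pair_injective Prod.snd) fun ω => (S ω, X1 ω, X2 ω)
  have hW : ent p (fun ω => if S ω then some (X2 ω) else none) = ent p S + α2 * ent p X2 := by
    rw [ent_erasure p hp1 (hSX.comp_right p Prod.snd), hS]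
  have hWX : ent p (fun ω => (if S ω then some (X2 ω) else none, (X1 ω, X2 ω))) =
      ent p (fun ω => ((X1 ω, X2 ω), if S ω then some (X2 ω) else none)) :=
    ent_comp_of_injective p Prod.swap_injective
      fun ω => ((X1 ω, X2 ω), if S ω then some (X2 ω) else none)
  constructor
  · rw [entC, hXW, hW, entC]
    ring
  · rw [mi, hWX, hXW, hW]
    ring

/-- If Ū is independent of (X1,X2) and W = X2 w.p. α2, W = c (modelled by `none`) w.p. 1-α2 with
the Bernoulli switch independent of (X1,X2,Ū), then H(X1,X2|W) = α2 H(X1|X2) + (1-α2) H(X1,X2),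
and hence I(W;X1,X2) = α2 H(X2). -/
theorem randomized_response_cond_ent {Ω α β γ : Type}
    [Fintype Ω] [Fintype α] [Fintype β] [Fintype γ]
    (p : Ω → ℝ) (hp0 : ∀ ω, 0 ≤ p ω) (hp1 : ∑ ω, p ω = 1)
    (X1 : Ω → α) (X2 : Ω → β) (U : Ω → γ) (S : Ω → Bool) (α2 : ℝ)
    (hα0 : 0 ≤ α2) (hα1 : α2 ≤ 1) (hS : pr p S true = α2)
    (hUind : IndepRV p U (fun ω => (X1 ω, X2 ω)))
    (hSind : IndepRV p S (fun ω => (X1 ω, X2 ω, U ω))) :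
    entC p (fun ω => (X1 ω, X2 ω))
        (fun ω => (if S ω then some (X2 ω) else none : Option β)) =
      α2 * entC p X1 X2 + (1 - α2) * ent p (fun ω => (X1 ω, X2 ω)) ∧
    mi p (fun ω => (if S ω then some (X2 ω) else none : Option β))
        (fun ω => (X1 ω, X2 ω)) = α2 * ent p X2 :=
  randomized_response_cond_ent_general p hp1 X1 X2 U S α2 hS hSind
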